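/- arXiv:2008.12859 — 3 statements merged into one kernel-verified Lean document; each statement's English description precedes it below -/
import Mathlib

section
/- Let A ∈ ℝ^{n×n} and C ∈ ℝ^{m×n}. If there exist a nonzero z ∈ ℝ^n with Σ_{k=0}^{T−1} |supp(C A^k z)| ≤ 2s, then there exist x₀ ≠ x₀' in ℝ^n and error sequences e_k, e_k' each with support of size at most s, such that C A^k x₀ + e_k = C A^k x₀' + e_k' for all k = 0,...,T−1; hence no decoder can correct s errors after T steps. -/
open Matrix

/-- Converse of the secure-estimation condition for time-varying attacked
nodes: if some nonzero `z` has `Σ_{k<T} |supp(C A^k z)| ≤ 2s`, then two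
distinct initial states and `s`-sparse attack sequences produce identical
outputs over `T` steps. -/
theorem secure_estimation_converse_time_varying {n m T s : ℕ}
    (A : Matrix (Fin n) (Fin n) ℝ) (C : Matrix (Fin m) (Fin n) ℝ)
    (h : ∃ z : Fin n → ℝ, z ≠ 0 ∧
      (∑ k : Fin T,
        (Finset.univ.filter fun i => (C * A ^ (k : ℕ)).mulVec z i ≠ 0).card) ≤ 2 * s) :
    ∃ (x₀ x₀' : Fin n → ℝ) (e e' : Fin T → Fin m → ℝ),
      x₀ ≠ x₀' ∧
      (∀ k, (Finset.univ.filter fun i => e k i ≠ 0).card ≤ s) ∧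
      (∀ k, (Finset.univ.filter fun i => e' k i ≠ 0).card ≤ s) ∧
      (∀ k : Fin T,
        (C * A ^ (k : ℕ)).mulVec x₀ + e k = (C * A ^ (k : ℕ)).mulVec x₀' + e' k) := by
  obtain ⟨z, hz, hsum⟩ := h
  set v : Fin T → Fin m → ℝ := fun k => (C * A ^ (k : ℕ)).mulVec z with hv
  set F : Fin T → Finset (Fin m) :=
    fun k => Finset.univ.filter fun i => v k i ≠ 0 with hF
  have hFk : ∀ k, (F k).card ≤ 2 * s := by
    intro k
    calc (F k).card ≤ ∑ k : Fin T, (F k).card :=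
          Finset.single_le_sum (f := fun k => (F k).card) (fun _ _ => Nat.zero_le _) (Finset.mem_univ k)
      _ ≤ 2 * s := hsum
  have hex : ∀ k, ∃ S : Finset (Fin m), S ⊆ F k ∧ S.card = (F k).card - s := by
    intro k
    obtain ⟨S, hS, hcard⟩ := Finset.exists_subset_card_eq
      (show (F k).card - s ≤ (F k).card from Nat.sub_le _ _)
    exact ⟨S, hS, hcard⟩
  choose S hS hScard using hex
  refine ⟨z, 0, (fun k i => if i ∈ S k then -v k i else 0),
      (fun k i => if i ∈ S k then 0 else v k i), hz, ?_, ?_, ?_⟩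
  · intro k
    have hsub : (Finset.univ.filter fun i =>
        (if i ∈ S k then -v k i else 0) ≠ 0) ⊆ S k := by
      intro i hi
      simp only [Finset.mem_filter] at hi
      by_contra hc
      simp [hc] at hi
    calc _ ≤ (S k).card := Finset.card_le_card hsub
      _ = (F k).card - s := hScard k
      _ ≤ s := by have := hFk k; omega
  · intro k
    have hsub : (Finset.univ.filter fun i =>
        (if i ∈ S k then 0 else v k i) ≠ 0) ⊆ F k \ S k := by
      intro i hi
      simp only [Finset.mem_filter] at hi
      by_cases hc : i ∈ S k
      · simp [hc] at hi
      · simp only [hc, if_neg, ite_false] at hi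
        exact Finset.mem_sdiff.2 ⟨Finset.mem_filter.2 ⟨Finset.mem_univ _, hi.2⟩, hc⟩
    calc _ ≤ (F k \ S k).card := Finset.card_le_card hsub
      _ = (F k).card - (S k).card := Finset.card_sdiff_of_subset (hS k)
      _ ≤ s := by rw [hScard k]; have := hFk k; omega
  · intro k
    funext i
    simp only [Pi.add_apply, Matrix.mulVec_zero, Pi.zero_apply]
    by_cases hc : i ∈ S k
    · simp [hc, hv]
    · simp [hc, hv]
end

section
/- Let A ∈ ℝ^{n×n} and C ∈ ℝ^{m×n}, and suppose for every nonzero z ∈ ℝ^n, |supp(Cz) ∪ supp(CAz) ∪ ⋯ ∪ supp(C A^{T−1} z)| > 2s. Then for any x₀, x₀' ∈ ℝ^n, any fixed index sets K, K' ⊆ {1,...,m} with |K| ≤ s, |K'| ≤ s, and error sequences e_k, e_k' with supp(e_k) ⊆ K and supp(e_k') ⊆ K', if C A^k x₀ + e_k = C A^k x₀' + e_k' for all k = 0,...,T−1, then x₀ = x₀'. -/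
open Matrix

/-- Uniqueness for secure estimation with fixed attacked nodes: if for every
nonzero `z`, `|supp(Cz) ∪ supp(CAz) ∪ ⋯ ∪ supp(C A^{T-1} z)| > 2s`, then
attacks supported on fixed sets of size at most `s` cannot make two different
initial states produce identical outputs. -/
theorem secure_estimation_unique_fixed {n m T s : ℕ}
    (A : Matrix (Fin n) (Fin n) ℝ) (C : Matrix (Fin m) (Fin n) ℝ)
    (hobs : ∀ z : Fin n → ℝ, z ≠ 0 →
      2 * s < (Finset.univ.filter fun i =>
        ∃ k : Fin T, (C * A ^ (k : ℕ)).mulVec z i ≠ 0).card)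
    (x₀ x₀' : Fin n → ℝ) (K K' : Finset (Fin m))
    (hK : K.card ≤ s) (hK' : K'.card ≤ s)
    (e e' : Fin T → Fin m → ℝ)
    (he : ∀ k i, e k i ≠ 0 → i ∈ K)
    (he' : ∀ k i, e' k i ≠ 0 → i ∈ K')
    (hout : ∀ k : Fin T,
      (C * A ^ (k : ℕ)).mulVec x₀ + e k = (C * A ^ (k : ℕ)).mulVec x₀' + e' k) :
    x₀ = x₀' := by
  by_contra hne
  have hz : x₀ - x₀' ≠ 0 := sub_ne_zero.mpr hne
  have hsub : (Finset.univ.filter fun i =>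
      ∃ k : Fin T, (C * A ^ (k : ℕ)).mulVec (x₀ - x₀') i ≠ 0) ⊆ K ∪ K' := by
    intro i hi
    obtain ⟨k, hk⟩ := (Finset.mem_filter.mp hi).2
    rw [mulVec_sub] at hk
    have := congrFun (hout k) i
    simp only [Pi.add_apply, Pi.sub_apply] at hk this
    by_cases hek : e k i = 0
    · refine Finset.mem_union_right _ (he' k i ?_)
      intro h0; rw [hek, h0] at this; exact hk (by linarith)
    · exact Finset.mem_union_left _ (he k i hek)
  have := hobs (x₀ - x₀') hz
  have hle : (Finset.univ.filter fun i =>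
      ∃ k : Fin T, (C * A ^ (k : ℕ)).mulVec (x₀ - x₀') i ≠ 0).card ≤ (K ∪ K').card :=
    Finset.card_le_card hsub
  have := Finset.card_union_le K K'
  omega
end

section
/- Let F ∈ ℝ^{N×M} have δ_{2s}(F) < 1/√2, and suppose ỹ = F e for an s-sparse e. Let ê minimize ‖e'‖₁ subject to F e' = ỹ. Then ê = e (exact recovery). -/
/-!
Write `h = ê - e`, so that `F h = 0`. Minimality of `‖ê‖₁` gives the cone condition
`‖h_{T₀ᶜ}‖₁ ≤ ‖h_{T₀}‖₁` for `T₀ = supp e`, hence also for the set `T` of the `s` largest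
entries of `|h|`. Following Cai and Zhang, the tail `h_{Tᶜ}` satisfies `‖h_{Tᶜ}‖_∞ ≤ α` and
`‖h_{Tᶜ}‖₁ ≤ s α` for `α = ‖h_T‖₁ / s`, so it is a convex combination of `s`-sparse vectors `u`
supported off `T` with `‖u‖_∞ ≤ α`; by Cauchy–Schwarz `‖u‖₂² ≤ s α² ≤ ‖h_T‖₂²`. Testing the RIP
on `(√2 + 1) h_T + u` and `(√2 - 1) h_T - u` gives `(1 - √2 δ) ‖h_T‖₂² ≤ ⟪F h_T, F (h_T + u)⟫`.
The right side is affine in `u`, so averaging over the convex combination turns it into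
`⟪F h_T, F h⟫ = 0`. Hence `h_T = 0`, and then `h = 0` by the cone condition.
-/

open Finset Matrix

theorem mem_segment_add_smul_add_smul {𝕜 E : Type*} [Field 𝕜] [LinearOrder 𝕜]
    [IsStrictOrderedRing 𝕜] [AddCommGroup E] [Module 𝕜 E] (v d : E) {a b : 𝕜} (ha : a ≤ 0)
    (hb : 0 ≤ b) : v ∈ segment 𝕜 (v + a • d) (v + b • d) := by
  rw [mem_segment_iff_sameRay, sub_add_cancel_left, add_sub_cancel_left, ← neg_smul]
  exact sameRay_smul_smul_of_mul_nonneg (mul_nonneg (neg_nonneg.2 ha) hb)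

section SparsePolytope

variable {ι : Type*} [Fintype ι] {α : ℝ} {s : ℕ}

noncomputable def fractionalSupport (α : ℝ) (v : ι → ℝ) : Finset ι := {i | 0 < v i ∧ v i < α}

theorem mem_fractionalSupport {v : ι → ℝ} {i : ι} :
    i ∈ fractionalSupport α v ↔ 0 < v i ∧ v i < α := by
  simp [fractionalSupport]

variable [DecidableEq ι]

theorem card_support_le_of_card_fractionalSupport_le_one {v : ι → ℝ}
    (hv : ∀ i, 0 ≤ v i ∧ v i ≤ α) (hsum : ∑ i, v i ≤ s * α)
    (hfrac : #(fractionalSupport α v) ≤ 1) : #{i | v i ≠ 0} ≤ s := by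
  set Z : Finset ι := {i | v i ≠ 0}
  by_contra! hlt
  obtain ⟨i₀, hi₀⟩ : Z.Nonempty := card_pos.1 (by omega)
  have hα : 0 < α := ((hv i₀).1.lt_of_ne' (mem_filter.1 hi₀).2).trans_le (hv i₀).2
  have : Nonempty ι := ⟨i₀⟩
  obtain ⟨j, hj⟩ := card_le_one_iff_subset_singleton.1 hfrac
  have hZα : ∀ i ∈ Z.erase j, v i = α := by
    intro i hi
    obtain ⟨hij, hiZ⟩ := mem_erase.1 hi
    by_contra hne
    refine hij (mem_singleton.1 (hj (mem_fractionalSupport.2 ?_)))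
    exact ⟨(hv i).1.lt_of_ne' (mem_filter.1 hiZ).2, (hv i).2.lt_of_ne hne⟩
  have key : #(Z.erase j) * α + v j ≤ s * α := by
    calc #(Z.erase j) * α + v j = ∑ i ∈ insert j (Z.erase j), v i := by
          rw [sum_insert (notMem_erase j Z), sum_congr rfl hZα, sum_const, nsmul_eq_mul, add_comm]
      _ ≤ ∑ i, v i := sum_le_sum_of_subset_of_nonneg (subset_univ _) fun i _ _ => (hv i).1
      _ ≤ s * α := hsum
  rcases eq_or_ne (v j) 0 with hj0 | hj0
  · have hZ : Z.erase j = Z := erase_eq_of_notMem fun h => (mem_filter.1 h).2 hj0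
    rw [hZ, hj0, add_zero] at key
    exact hlt.not_ge (by exact_mod_cast le_of_mul_le_mul_right key hα)
  · have hlt' : (#(Z.erase j) : ℝ) < s :=
      lt_of_mul_lt_mul_right (by linarith [(hv j).1.lt_of_ne' hj0]) hα.le
    have := pred_card_le_card_erase (s := Z) (a := j)
    have : #(Z.erase j) < s := by exact_mod_cast hlt'
    omega

theorem exists_mem_segment_fractionalSupport_ssubset {v : ι → ℝ} (hv : ∀ i, 0 ≤ v i ∧ v i ≤ α)
    {j k : ι} (hjk : j ≠ k) (hj : j ∈ fractionalSupport α v) (hk : k ∈ fractionalSupport α v) :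
    ∃ p q : ι → ℝ, v ∈ segment ℝ p q ∧ ∀ w ∈ ({p, q} : Set (ι → ℝ)),
      (∀ i, 0 ≤ w i ∧ w i ≤ α) ∧ ∑ i, w i = ∑ i, v i ∧
        fractionalSupport α w ⊂ fractionalSupport α v := by
  rw [mem_fractionalSupport] at hj hk
  set d : ι → ℝ := Pi.single j 1 - Pi.single k 1
  have hd : ∀ (t : ℝ) i, (v + t • d) i =
      if i = j then v j + t else if i = k then v k - t else v i := by
    intro t i
    by_cases hij : i = j <;> by_cases hik : i = k <;> simp_all [d, sub_eq_add_neg]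
  have hsum : ∀ t : ℝ, ∑ i, (v + t • d) i = ∑ i, v i := by
    intro t
    simp [d, sum_add_distrib, ← mul_sum, sum_sub_distrib]
  -- Moving mass `t` from `v k` to `v j`: an extreme admissible `t` pushes one of the two
  -- coordinates to `0` or `α`.
  have hmem : ∀ t : ℝ, -v j ≤ t → v k - α ≤ t → t ≤ α - v j → t ≤ v k →
      (t = -v j ∨ t = v k - α ∨ t = α - v j ∨ t = v k) →
      (∀ i, 0 ≤ (v + t • d) i ∧ (v + t • d) i ≤ α) ∧ ∑ i, (v + t • d) i = ∑ i, v i ∧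
        fractionalSupport α (v + t • d) ⊂ fractionalSupport α v := by
    intro t h₁ h₂ h₃ h₄ hend
    refine ⟨fun i => ?_, hsum t, (ssubset_iff_of_subset fun i hi => ?_).2 ?_⟩
    · rw [hd]
      split_ifs
      exacts [⟨by linarith, by linarith⟩, ⟨by linarith, by linarith⟩, hv i]
    · rw [mem_fractionalSupport] at hi ⊢
      rw [hd] at hi
      split_ifs at hi with hij hik
      exacts [hij ▸ hj, hik ▸ hk, hi]
    · by_contra! hall
      have hj' := mem_fractionalSupport.1 (hall j (mem_fractionalSupport.2 hj))
      have hk' := mem_fractionalSupport.1 (hall k (mem_fractionalSupport.2 hk))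
      simp only [hd, if_pos, if_neg hjk.symm] at hj' hk'
      rcases hend with rfl | rfl | rfl | rfl <;> linarith
  have ha₀ : 0 ≤ min (v j) (α - v k) := le_min (by linarith) (by linarith)
  have hb₀ : 0 ≤ min (α - v j) (v k) := le_min (by linarith) (by linarith)
  refine ⟨_, _, mem_segment_add_smul_add_smul v d (neg_nonpos.2 ha₀) hb₀, ?_⟩
  rintro w (rfl | rfl)
  · have := min_le_left (v j) (α - v k)
    have := min_le_right (v j) (α - v k)
    refine hmem _ (by linarith) (by linarith) (by linarith) (by linarith) ?_
    rcases min_choice (v j) (α - v k) with h | h <;> rw [h] <;> simp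
  · have := min_le_left (α - v j) (v k)
    have := min_le_right (α - v j) (v k)
    refine hmem _ (by linarith) (by linarith) (by linarith) (by linarith) ?_
    rcases min_choice (α - v j) (v k) with h | h <;> rw [h] <;> simp

theorem mem_convexHull_sparse_of_nonneg (v : ι → ℝ) (hv : ∀ i, 0 ≤ v i ∧ v i ≤ α)
    (hsum : ∑ i, v i ≤ s * α) :
    v ∈ convexHull ℝ {u : ι → ℝ | #{i | u i ≠ 0} ≤ s ∧ ∀ i, |u i| ≤ α} := by
  induction hn : #(fractionalSupport α v) using Nat.strong_induction_on generalizing v with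
  | _ n ih =>
  by_cases hn1 : n ≤ 1
  · exact subset_convexHull ℝ _ ⟨card_support_le_of_card_fractionalSupport_le_one hv hsum
      (hn ▸ hn1), fun i => abs_le.2 ⟨by linarith [hv i], (hv i).2⟩⟩
  obtain ⟨j, hj, k, hk, hjk⟩ := one_lt_card.1 (hn ▸ not_le.1 hn1)
  obtain ⟨p, q, hvpq, hpq⟩ := exists_mem_segment_fractionalSupport_ssubset hv hjk hj hk
  have hmem : ∀ w ∈ ({p, q} : Set (ι → ℝ)),
      w ∈ convexHull ℝ {u : ι → ℝ | #{i | u i ≠ 0} ≤ s ∧ ∀ i, |u i| ≤ α} := by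
    intro w hw
    obtain ⟨hw, hwsum, hwfrac⟩ := hpq w hw
    exact ih _ (hn ▸ card_lt_card hwfrac) w hw (hwsum ▸ hsum) rfl
  exact (convex_convexHull ℝ _).segment_subset (hmem p (by simp)) (hmem q (by simp)) hvpq

theorem mem_convexHull_sparse {y : ι → ℝ} (hy : ∀ i, |y i| ≤ α) (hsum : ∑ i, |y i| ≤ s * α) :
    y ∈ convexHull ℝ
      {u : ι → ℝ | #{i | u i ≠ 0} ≤ s ∧ (∀ i, |u i| ≤ α) ∧ ∀ i, y i = 0 → u i = 0} := by
  let σ : (ι → ℝ) →ₗ[ℝ] (ι → ℝ) := LinearMap.mulLeft ℝ fun i => (SignType.sign (y i) : ℝ)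
  have hσ : ∀ u i, σ u i = SignType.sign (y i) * u i := fun _ _ => rfl
  have hy' : y = σ fun i => |y i| := funext fun i => (sign_mul_abs (y i)).symm
  have habs := mem_convexHull_sparse_of_nonneg (s := s) (fun i => |y i|)
    (fun i => ⟨abs_nonneg _, hy i⟩) hsum
  have hmem := σ.image_convexHull _ ▸ Set.mem_image_of_mem σ habs
  rw [← hy'] at hmem
  refine convexHull_mono ?_ hmem
  rintro _ ⟨u, ⟨hus, huα⟩, rfl⟩
  refine ⟨(card_le_card (monotone_filter_right _ fun i _ hi => right_ne_zero_of_mul hi)).trans hus,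
    fun i => ?_, fun i hi => by simp [hσ, hi]⟩
  rw [hσ, abs_mul]
  generalize SignType.sign (y i) = c
  cases c <;> simp [huα i, (abs_nonneg _).trans (hy i)]

end SparsePolytope

theorem mul_sq_sum_abs_div_le_sum_sq {ι : Type*} {s : ℕ} {x : ι → ℝ} {T : Finset ι} (hT : #T ≤ s)
    (hs : (0 : ℝ) < s) : s * ((∑ i ∈ T, |x i|) / s) ^ 2 ≤ ∑ i ∈ T, x i ^ 2 := by
  have hCS : (∑ i ∈ T, |x i|) ^ 2 ≤ s * ∑ i ∈ T, x i ^ 2 := calc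
    (∑ i ∈ T, |x i|) ^ 2 ≤ #T * ∑ i ∈ T, |x i| ^ 2 := sq_sum_le_card_mul_sum_sq
    _ ≤ s * ∑ i ∈ T, x i ^ 2 := by
      simp only [sq_abs]
      gcongr
  rw [show (s : ℝ) * ((∑ i ∈ T, |x i|) / s) ^ 2 = (∑ i ∈ T, |x i|) ^ 2 / s by field_simp,
    div_le_iff₀ hs]
  linarith

section SparseVectors

variable {ι : Type*} [Fintype ι] {s : ℕ}

theorem card_support_smul_add_smul_le (a b : ℝ) (x u : ι → ℝ) :
    #{i | (a • x + b • u) i ≠ 0} ≤ #{i | x i ≠ 0} + #{i | u i ≠ 0} := by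
  classical
  refine (card_le_card fun i hi => ?_).trans (card_union_le _ _)
  simp only [mem_filter, mem_univ, true_and, mem_union] at hi ⊢
  by_contra! h
  simp [h.1, h.2] at hi

theorem sum_sq_le_of_card_support_le {u : ι → ℝ} {α : ℝ} (hs : #{i | u i ≠ 0} ≤ s)
    (hu : ∀ i, |u i| ≤ α) : ∑ i, u i ^ 2 ≤ s * α ^ 2 := by
  rw [← sum_filter_of_ne fun i _ h => by simpa using h]
  calc ∑ i with u i ≠ 0, u i ^ 2 ≤ #{i | u i ≠ 0} * α ^ 2 := by
        simpa using sum_le_card_nsmul _ _ _ fun i _ =>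
          sq_le_sq' (abs_le.1 (hu i)).1 (abs_le.1 (hu i)).2
    _ ≤ s * α ^ 2 := by gcongr

variable [DecidableEq ι]

theorem exists_max_sum_card_le (f : ι → ℝ) (s : ℕ) :
    ∃ T : Finset ι, #T ≤ s ∧ (∀ T' : Finset ι, #T' ≤ s → ∑ i ∈ T', f i ≤ ∑ i ∈ T, f i) ∧
      ∀ i ∉ T, s * f i ≤ ∑ j ∈ T, f j := by
  obtain ⟨T, hT, hmax⟩ := exists_max_image {T : Finset ι | #T ≤ s} (fun T => ∑ i ∈ T, f i)
    ⟨∅, by simp⟩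
  simp only [mem_filter, mem_univ, true_and] at hT hmax
  refine ⟨T, hT, hmax, fun i hi => ?_⟩
  rcases hT.lt_or_eq with hlt | rfl
  · have hins := hmax (insert i T) (by rw [card_insert_of_notMem hi]; omega)
    have hempty := hmax ∅ (by simp)
    rw [sum_insert hi] at hins
    rw [sum_empty] at hempty
    nlinarith
  · have hle : ∀ j ∈ T, f i ≤ f j := fun j hj => by
      have hswap := hmax (insert i (T.erase j)) (by
        rw [card_insert_of_notMem fun h => hi (mem_of_mem_erase h), card_erase_of_mem hj]
        have := card_pos.2 ⟨j, hj⟩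
        omega)
      rw [sum_insert fun h => hi (mem_of_mem_erase h), sum_erase_eq_sub hj] at hswap
      linarith
    simpa using card_nsmul_le_sum T f (f i) hle

end SparseVectors

section NullSpaceProperty

variable {m ι : Type*} [Fintype ι] [DecidableEq ι]

def NullSpaceProperty (F : Matrix m ι ℝ) (s : ℕ) : Prop :=
  ∀ h : ι → ℝ, F *ᵥ h = 0 → ∀ T : Finset ι, #T ≤ s → ∑ i ∈ Tᶜ, |h i| ≤ ∑ i ∈ T, |h i| → h = 0

theorem sum_abs_compl_le_of_sum_abs_add_le {e h : ι → ℝ} {T : Finset ι}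
    (he : ∀ i ∉ T, e i = 0) (hle : ∑ i, |e i + h i| ≤ ∑ i, |e i|) :
    ∑ i ∈ Tᶜ, |h i| ≤ ∑ i ∈ T, |h i| := by
  rw [← sum_add_sum_compl T, ← sum_add_sum_compl T fun i => |e i|] at hle
  have hcompl : ∑ i ∈ Tᶜ, |e i + h i| = ∑ i ∈ Tᶜ, |h i| :=
    sum_congr rfl fun i hi => by rw [he i (mem_compl.1 hi), zero_add]
  have hecompl : ∑ i ∈ Tᶜ, |e i| = 0 :=
    sum_eq_zero fun i hi => by rw [he i (mem_compl.1 hi), abs_zero]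
  have htri : ∑ i ∈ T, |e i| ≤ ∑ i ∈ T, |e i + h i| + ∑ i ∈ T, |h i| := by
    rw [← sum_add_distrib]
    exact sum_le_sum fun i _ => by simpa using abs_sub (e i + h i) (h i)
  linarith

theorem NullSpaceProperty.eq_of_sum_abs_le {F : Matrix m ι ℝ} {s : ℕ}
    (hF : NullSpaceProperty F s) {e e' : ι → ℝ} (he : #{i | e i ≠ 0} ≤ s)
    (hFe : F *ᵥ e' = F *ᵥ e) (hle : ∑ i, |e' i| ≤ ∑ i, |e i|) : e' = e :=
  sub_eq_zero.1 <| hF (e' - e) (by rw [mulVec_sub, hFe, sub_self]) _ he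
    (sum_abs_compl_le_of_sum_abs_add_le (fun i hi => by simpa using hi) (by simpa using hle))

end NullSpaceProperty

section RestrictedIsometry

variable {m ι : Type*} [Fintype m] [Fintype ι] {s : ℕ} {δ : ℝ}

def HasRIP (F : Matrix m ι ℝ) (k : ℕ) (δ : ℝ) : Prop :=
  ∀ x : ι → ℝ, #{i | x i ≠ 0} ≤ k →
    (1 - δ) * (∑ i, x i ^ 2) ≤ ∑ i, (F *ᵥ x) i ^ 2 ∧ ∑ i, (F *ᵥ x) i ^ 2 ≤ (1 + δ) * ∑ i, x i ^ 2

theorem HasRIP.one_sub_sqrt_two_mul_sum_sq_le_dotProduct {F : Matrix m ι ℝ}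
    (hF : HasRIP F (2 * s) δ) (hδ0 : 0 ≤ δ) {T : Finset ι} (hT : #T ≤ s) {x u : ι → ℝ}
    (hx : ∀ i ∉ T, x i = 0) (hu : #{i | u i ≠ 0} ≤ s) (huT : ∀ i ∈ T, u i = 0)
    (hux : ∑ i, u i ^ 2 ≤ ∑ i, x i ^ 2) :
    (1 - √2 * δ) * ∑ i, x i ^ 2 ≤ (F *ᵥ x) ⬝ᵥ (F *ᵥ (x + u)) := by
  set r := √2
  have hr : r ^ 2 = 2 := Real.sq_sqrt zero_le_two
  have hr0 : 0 < r := by positivity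
  have hxu : ∀ i, x i * u i = 0 := fun i => by
    by_cases hi : i ∈ T <;> simp [hi, hx, huT]
  have hxs : #{i | x i ≠ 0} ≤ s :=
    (card_le_card fun i hi => by by_contra h; simp [hx i h] at hi).trans hT
  obtain ⟨ha, -⟩ := hF ((r + 1) • x + (1 : ℝ) • u)
    ((card_support_smul_add_smul_le _ _ _ _).trans (by omega))
  obtain ⟨-, hb⟩ := hF ((r - 1) • x + (-1 : ℝ) • u)
    ((card_support_smul_add_smul_le _ _ _ _).trans (by omega))
  have hnorm : ∀ c d : ℝ,
      ∑ i, (c • x + d • u) i ^ 2 = c ^ 2 * ∑ i, x i ^ 2 + d ^ 2 * ∑ i, u i ^ 2 := by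
    intro c d
    simp only [Pi.add_apply, Pi.smul_apply, smul_eq_mul, mul_sum, ← sum_add_distrib]
    exact sum_congr rfl fun i _ => by linear_combination (2 * c * d) * hxu i
  have hpol : ∑ i, (F *ᵥ ((r + 1) • x + (1 : ℝ) • u)) i ^ 2
      - ∑ i, (F *ᵥ ((r - 1) • x + (-1 : ℝ) • u)) i ^ 2 = 4 * r * ((F *ᵥ x) ⬝ᵥ (F *ᵥ (x + u))) := by
    simp only [mulVec_add, mulVec_smul, dotProduct, Pi.add_apply, Pi.smul_apply, smul_eq_mul,
      mul_sum, ← sum_sub_distrib]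
    exact sum_congr rfl fun i _ => by ring
  rw [hnorm] at ha hb
  have key : 4 * r * ((1 - r * δ) * ∑ i, x i ^ 2) ≤ 4 * r * ((F *ᵥ x) ⬝ᵥ (F *ᵥ (x + u))) := by
    linear_combination ha + hb + 2 * mul_le_mul_of_nonneg_left hux hδ0 + hpol
      - 2 * δ * (∑ i, x i ^ 2) * hr
  exact le_of_mul_le_mul_left key (by positivity)

theorem HasRIP.eq_zero_of_mem_convexHull {F : Matrix m ι ℝ} (hF : HasRIP F (2 * s) δ)
    (hδ0 : 0 ≤ δ) (hδ : δ < 1 / √2) {T : Finset ι} (hT : #T ≤ s) {x y : ι → ℝ}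
    (hx : ∀ i ∉ T, x i = 0)
    (hy : y ∈ convexHull ℝ
      {u | #{i | u i ≠ 0} ≤ s ∧ (∀ i ∈ T, u i = 0) ∧ ∑ i, u i ^ 2 ≤ ∑ i, x i ^ 2})
    (hxy : F *ᵥ (x + y) = 0) : x = 0 := by
  -- `u ↦ ⟪F x, F (x + u)⟫` is affine, so the bound passes from the generators to their hull
  have hconv : Convex ℝ {u | (1 - √2 * δ) * ∑ i, x i ^ 2 ≤ (F *ᵥ x) ⬝ᵥ (F *ᵥ (x + u))} := by
    refine (convex_halfSpace_ge (f := fun v : ι → ℝ => (F *ᵥ x) ⬝ᵥ (F *ᵥ v))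
      ⟨fun v w => ?_, fun c v => ?_⟩ _).translate_preimage_right x
    · simp [mulVec_add, dotProduct_add]
    · simp [mulVec_smul, dotProduct_smul]
  have hbound : (1 - √2 * δ) * ∑ i, x i ^ 2 ≤ (F *ᵥ x) ⬝ᵥ (F *ᵥ (x + y)) :=
    convexHull_min (fun u hu =>
      hF.one_sub_sqrt_two_mul_sum_sq_le_dotProduct hδ0 hT hx hu.1 hu.2.1 hu.2.2) hconv hy
  have hδ' : 0 < 1 - √2 * δ := by
    have := Real.sqrt_pos.2 (zero_lt_two (α := ℝ))
    rw [lt_div_iff₀ this] at hδ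
    linarith
  rw [hxy, dotProduct_zero] at hbound
  have : ∑ i, x i ^ 2 = 0 :=
    le_antisymm (nonpos_of_mul_nonpos_right hbound hδ') (sum_nonneg fun i _ => sq_nonneg _)
  funext i
  simpa using (sum_eq_zero_iff_of_nonneg fun i _ => sq_nonneg (x i)).1 this i (mem_univ i)

theorem HasRIP.eq_zero_of_sum_abs_compl_le [DecidableEq ι] {F : Matrix m ι ℝ}
    (hF : HasRIP F (2 * s) δ) (hδ0 : 0 ≤ δ) (hδ : δ < 1 / √2) {h : ι → ℝ} (hFh : F *ᵥ h = 0)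
    {T : Finset ι} (hT : #T ≤ s) (htop : ∀ i ∉ T, s * |h i| ≤ ∑ j ∈ T, |h j|)
    (hcone : ∑ i ∈ Tᶜ, |h i| ≤ ∑ i ∈ T, |h i|) : h = 0 := by
  suffices hT0 : ∑ i ∈ T, |h i| = 0 by
    have hsum : ∑ i, |h i| = 0 := le_antisymm (by rw [← sum_add_sum_compl T]; linarith)
      (sum_nonneg fun i _ => abs_nonneg _)
    funext i
    simpa using (sum_eq_zero_iff_of_nonneg fun i _ => abs_nonneg (h i)).1 hsum i (mem_univ i)
  obtain rfl | hs := s.eq_zero_or_pos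
  · simp [card_eq_zero.1 (Nat.le_zero.1 hT)]
  set L := ∑ i ∈ T, |h i|
  set x := T.piecewise h 0
  have hx : ∀ i ∉ T, x i = 0 := fun i hi => T.piecewise_eq_of_notMem _ _ hi
  have hyT : ∀ i ∈ T, (h - x) i = 0 := fun i hi => by simp [x, hi]
  have hy : ∀ i ∉ T, (h - x) i = h i := fun i hi => by simp [hx i hi]
  have hs' : (0 : ℝ) < s := Nat.cast_pos.2 hs
  have hyα : ∀ i, |(h - x) i| ≤ L / s := fun i => by
    by_cases hi : i ∈ T
    · rw [hyT i hi, abs_zero]; positivity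
    · rw [hy i hi, le_div_iff₀ hs', mul_comm]; exact htop i hi
  have hy1 : ∑ i, |(h - x) i| ≤ s * (L / s) := by
    rw [← sum_add_sum_compl T, sum_eq_zero fun i hi => by rw [hyT i hi, abs_zero], zero_add,
      mul_div_cancel₀ _ hs'.ne', sum_congr rfl fun i hi => by rw [hy i (mem_compl.1 hi)]]
    exact hcone
  have hxL : s * (L / s) ^ 2 ≤ ∑ i, x i ^ 2 := by
    refine (mul_sq_sum_abs_div_le_sum_sq hT hs').trans_eq ?_
    rw [← sum_subset (subset_univ T) fun i _ hi => by rw [hx i hi, zero_pow two_ne_zero]]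
    exact sum_congr rfl fun i hi => by simp [x, hi]
  have hhull : h - x ∈ convexHull ℝ
      {u | #{i | u i ≠ 0} ≤ s ∧ (∀ i ∈ T, u i = 0) ∧ ∑ i, u i ^ 2 ≤ ∑ i, x i ^ 2} :=
    convexHull_mono (by
      rintro u ⟨hus, huα, hu0⟩
      exact ⟨hus, fun i hi => hu0 i (hyT i hi), (sum_sq_le_of_card_support_le hus huα).trans hxL⟩)
      (mem_convexHull_sparse hyα hy1)
  have hx0 : x = 0 := hF.eq_zero_of_mem_convexHull hδ0 hδ hT hx hhull (by rwa [add_sub_cancel])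
  exact sum_eq_zero fun i hi => by simpa [x, hi] using congrFun hx0 i

theorem HasRIP.nullSpaceProperty [DecidableEq ι] {F : Matrix m ι ℝ} (hF : HasRIP F (2 * s) δ)
    (hδ0 : 0 ≤ δ) (hδ : δ < 1 / √2) : NullSpaceProperty F s := by
  intro h hFh T₀ hT₀ hcone₀
  obtain ⟨T, hT, hmax, htop⟩ := exists_max_sum_card_le (fun i => |h i|) s
  have hcone : ∑ i ∈ Tᶜ, |h i| ≤ ∑ i ∈ T, |h i| := by
    have := hmax T₀ hT₀
    have := sum_add_sum_compl T₀ fun i => |h i|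
    have := sum_add_sum_compl T fun i => |h i|
    linarith
  exact hF.eq_zero_of_sum_abs_compl_le hδ0 hδ hFh hT htop hcone

end RestrictedIsometry

/-- Exact recovery by ℓ₁-minimization: if `F` satisfies the RIP of order `2s`
with constant `δ_{2s} < 1/√2`, `e` is `s`-sparse with `ỹ = F e`, and `ê`
minimizes the ℓ₁ norm subject to `F ê = ỹ`, then `ê = e`. -/
theorem l1_exact_recovery {N M s : ℕ}
    (F : Matrix (Fin N) (Fin M) ℝ) (δ : ℝ) (hδ0 : 0 ≤ δ)
    (hδ : δ < 1 / Real.sqrt 2)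
    (hRIP : ∀ x : Fin M → ℝ, (Finset.univ.filter fun i => x i ≠ 0).card ≤ 2 * s →
      (1 - δ) * (∑ i, x i ^ 2) ≤ (∑ i, (F.mulVec x) i ^ 2) ∧
      (∑ i, (F.mulVec x) i ^ 2) ≤ (1 + δ) * (∑ i, x i ^ 2))
    (e : Fin M → ℝ)
    (hsparse : (Finset.univ.filter fun i => e i ≠ 0).card ≤ s)
    (ytil : Fin N → ℝ) (hy : F.mulVec e = ytil)
    (ehat : Fin M → ℝ) (hfeas : F.mulVec ehat = ytil)
    (hopt : ∀ e' : Fin M → ℝ, F.mulVec e' = ytil →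
      (∑ i, |ehat i|) ≤ ∑ i, |e' i|) :
    ehat = e := by
  have hF : HasRIP F (2 * s) δ := hRIP
  exact (hF.nullSpaceProperty hδ0 hδ).eq_of_sum_abs_le hsparse (hfeas.trans hy.symm) (hopt e hy)
end
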